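/- Let H be a complex Hilbert space and let L : [0, ∞) → B(H) be a family of bounded linear operators on H such that: (1) each L(k) is self-adjoint and the map k ↦ L(k) is continuous in the operator norm; (2) L(0) is coercive, i.e. there exists c > 0 with re⟨L(0)u, u⟩ ≥ c‖u‖² for all u ∈ H; (3) L(k) − L(0) is a compact operator for every k ≥ 0; (4) there exists α > 0 such that re⟨L(α)u, u⟩ > 0 for all u ≠ 0; (5) for every m ∈ ℕ there exist β_m > α and a subspace W_m ⊆ H of dimension m such that re⟨L(β_m)u, u⟩ ≤ 0 for all u ∈ W_m. Then the set { k > 0 : ker L(k) ≠ {0} } is infinite. -/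

import Mathlib

open Module Submodule

noncomputable section

namespace Thm46

variable {H : Type*} [NormedAddCommGroup H] [InnerProductSpace ℂ H] [CompleteSpace H]

/-- The real quadratic form of an operator. -/
def qf (a : H →L[ℂ] H) (u : H) : ℝ := (inner ℂ (a u) u : ℂ).re

lemma abs_qf_le (a : H →L[ℂ] H) (u : H) : |qf a u| ≤ ‖a u‖ * ‖u‖ := by
  refine le_trans (Complex.abs_re_le_norm _) ?_
  simpa using norm_inner_le_norm (𝕜 := ℂ) (a u) u

lemma qf_sub (a b : H →L[ℂ] H) (u : H) : qf (a - b) u = qf a u - qf b u := by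
  simp [qf, inner_sub_left]

lemma qf_le_add (a b : H →L[ℂ] H) (u : H) : qf a u ≤ qf b u + ‖a - b‖ * ‖u‖ ^ 2 := by
  have h1 : qf a u - qf b u = qf (a - b) u := (qf_sub a b u).symm
  have h2 : |qf (a - b) u| ≤ ‖(a - b) u‖ * ‖u‖ := abs_qf_le _ _
  have h3 : ‖(a - b) u‖ ≤ ‖a - b‖ * ‖u‖ := (a - b).le_opNorm u
  have h4 : ‖(a - b) u‖ * ‖u‖ ≤ ‖a - b‖ * ‖u‖ ^ 2 := by nlinarith [norm_nonneg u]
  have h5 := le_abs_self (qf (a - b) u)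
  linarith

lemma qf_smul (a : H →L[ℂ] H) (t : ℝ) (u : H) : qf a ((t : ℂ) • u) = t ^ 2 * qf a u := by
  simp only [qf, map_smul, inner_smul_left, inner_smul_right, Complex.conj_ofReal]
  rw [← mul_assoc, ← Complex.ofReal_mul, Complex.re_ofReal_mul]
  ring

/-- Key dimension bound: on subspaces where a compact operator is bounded below,
dimension is uniformly bounded. -/
lemma exists_bound_of_compact (T : H →L[ℂ] H) (hT : IsCompactOperator ⇑T) {c : ℝ} (hc : 0 < c) :
    ∃ N : ℕ, ∀ W : Submodule ℂ H, (∀ u ∈ W, c * ‖u‖ ≤ ‖T u‖) →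
      FiniteDimensional ℂ W ∧ finrank ℂ W ≤ N := by
  obtain ⟨K, hK, hTK⟩ := hT.image_subset_compact_of_bounded
    (Metric.isBounded_closedBall (x := (0 : H)) (r := 1))
  obtain ⟨t, htf, htcover⟩ := Metric.totallyBounded_iff.mp hK.totallyBounded (c / 2) (by positivity)
  set V := Submodule.span ℂ t with hV
  haveI : FiniteDimensional ℂ V := FiniteDimensional.span_of_finite ℂ htf
  have hproj : ∀ u : H, ‖T u - (orthogonalProjection V (T u) : H)‖ ≤ (c / 2) * ‖u‖ := by
    intro u
    rcases eq_or_ne u 0 with rfl | hu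
    · simp
    · have hnu : (0 : ℝ) < ‖u‖ := norm_pos_iff.mpr hu
      set w : H := (‖u‖⁻¹ : ℂ) • u with hw
      have hwn : ‖w‖ = 1 := by
        rw [hw, norm_smul]
        simp [norm_inv, abs_of_pos hnu, inv_mul_cancel₀ hnu.ne']
      have hwK : T w ∈ K := hTK ⟨w, by simp [Metric.mem_closedBall, hwn.le, dist_eq_norm], rfl⟩
      obtain ⟨y, hyt, hyb⟩ := Set.mem_iUnion₂.mp (htcover hwK)
      have hyV : y ∈ V := Submodule.subset_span hyt
      have hmin : ‖T w - (orthogonalProjection V (T w) : H)‖ ≤ ‖T w - y‖ := by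
        rw [show ‖T w - (orthogonalProjection V (T w) : H)‖ = ⨅ x : V, ‖T w - x‖ from
          Submodule.starProjection_minimal (T w)]
        exact ciInf_le_of_le ⟨0, fun x hx => by rcases hx with ⟨z, rfl⟩; positivity⟩
          ⟨y, hyV⟩ le_rfl
      have hby : ‖T w - y‖ < c / 2 := by
        have := hyb
        rw [Metric.mem_ball, dist_eq_norm] at this
        exact this
      have hscale : T u = (‖u‖ : ℂ) • T w := by
        rw [hw, map_smul, smul_smul]
        norm_cast
        rw [mul_inv_cancel₀ hnu.ne', one_smul]
      calc ‖T u - (orthogonalProjection V (T u) : H)‖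
          = ‖(‖u‖ : ℂ) • (T w - (orthogonalProjection V (T w) : H))‖ := by
            rw [hscale, smul_sub]
            congr 2
            rw [map_smul]
            rfl
        _ = ‖u‖ * ‖T w - (orthogonalProjection V (T w) : H)‖ := by
            rw [norm_smul]; simp [abs_of_pos hnu]
        _ ≤ ‖u‖ * (c / 2) := by
            exact mul_le_mul_of_nonneg_left (hmin.trans hby.le) hnu.le
        _ = (c / 2) * ‖u‖ := by ring
  refine ⟨finrank ℂ V, fun W hW => ?_⟩
  set φ : W →ₗ[ℂ] V := (orthogonalProjection V).toLinearMap ∘ₗ T.toLinearMap ∘ₗ W.subtype with hφ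
  have hinj : Function.Injective φ := by
    rw [← LinearMap.ker_eq_bot]
    ext u
    simp only [LinearMap.mem_ker, Submodule.mem_bot]
    constructor
    · intro h0
      have h1 : (orthogonalProjection V (T u.1) : H) = 0 := by
        have : φ u = 0 := h0
        rw [hφ] at this
        simp only [LinearMap.comp_apply] at this
        rw [show ((orthogonalProjection V).toLinearMap (T.toLinearMap (W.subtype u))) =
          orthogonalProjection V (T u.1) from rfl] at this
        rw [this]
        rfl
      have h2 : ‖T u.1‖ ≤ (c / 2) * ‖u.1‖ := by
        have := hproj u.1
        rwa [h1, sub_zero] at this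
      have h3 := hW u.1 u.2
      have : ‖u.1‖ = 0 := by nlinarith [norm_nonneg u.1, norm_nonneg (T u.1)]
      exact Subtype.ext (norm_eq_zero.mp this)
    · rintro rfl; simp
  exact ⟨FiniteDimensional.of_injective φ hinj, LinearMap.finrank_le_finrank_of_injective hinj⟩


/-- Dimensions of finite-dimensional subspaces on which the form of `a` is negative definite. -/
def negdims (a : H →L[ℂ] H) : Set ℕ :=
  {n | ∃ W : Submodule ℂ H, FiniteDimensional ℂ W ∧ finrank ℂ W = n ∧
        ∀ u ∈ W, u ≠ 0 → qf a u < 0}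

/-- The maximal dimension of a negative definite subspace. -/
def nu (a : H →L[ℂ] H) : ℕ := sSup (negdims a)

lemma zero_mem_negdims (a : H →L[ℂ] H) : 0 ∈ negdims a := by
  refine ⟨⊥, inferInstance, finrank_bot ℂ H, fun u hu h0 => absurd (Submodule.mem_bot ℂ |>.mp hu) h0⟩

lemma coercive_dist {b : H →L[ℂ] H} {c : ℝ} (hc : 0 < c)
    (hb : ∀ u, c * ‖u‖ ^ 2 ≤ qf b u) (x y : H) :
    c * ‖x - y‖ ≤ ‖b x - b y‖ := by
  have h1 := hb (x - y)
  have h2 : qf b (x - y) ≤ ‖b (x - y)‖ * ‖x - y‖ := (le_abs_self _).trans (abs_qf_le _ _)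
  have h3 : b (x - y) = b x - b y := map_sub b x y
  rcases eq_or_ne x y with rfl | hxy
  · simp
  · have hpos : 0 < ‖x - y‖ := norm_pos_iff.mpr (sub_ne_zero.mpr hxy)
    rw [← h3]
    nlinarith

lemma lower_of_neg {b : H →L[ℂ] H} {c : ℝ} (hc : 0 < c)
    (hb : ∀ u, c * ‖u‖ ^ 2 ≤ qf b u) (a : H →L[ℂ] H) (W : Submodule ℂ H)
    (hW : ∀ u ∈ W, u ≠ 0 → qf a u < 0) :
    ∀ u ∈ W, c * ‖u‖ ≤ ‖(a - b) u‖ := by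
  intro u hu
  rcases eq_or_ne u 0 with rfl | hu0
  · simp
  · have hpos : 0 < ‖u‖ := norm_pos_iff.mpr hu0
    have h1 : qf (a - b) u = qf a u - qf b u := qf_sub a b u
    have h2 : qf a u < 0 := hW u hu hu0
    have h3 := hb u
    have h4 : qf (a - b) u < -(c * ‖u‖ ^ 2) := by linarith
    have h5 : c * ‖u‖ ^ 2 < |qf (a - b) u| := by
      rw [abs_of_neg (show qf (a - b) u < 0 by nlinarith)]
      linarith
    have h6 : |qf (a - b) u| ≤ ‖(a - b) u‖ * ‖u‖ := abs_qf_le _ _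
    nlinarith

lemma negdims_bddAbove {b : H →L[ℂ] H} {c : ℝ} (hc : 0 < c)
    (hb : ∀ u, c * ‖u‖ ^ 2 ≤ qf b u) (a : H →L[ℂ] H)
    (hK : IsCompactOperator ⇑(a - b)) : BddAbove (negdims a) := by
  obtain ⟨N, hN⟩ := exists_bound_of_compact (a - b) hK hc
  refine ⟨N, fun n hn => ?_⟩
  obtain ⟨W, hWfd, hWrank, hWneg⟩ := hn
  exact hWrank ▸ (hN W (lower_of_neg hc hb a W hWneg)).2

lemma negdims_fd {b : H →L[ℂ] H} {c : ℝ} (hc : 0 < c)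
    (hb : ∀ u, c * ‖u‖ ^ 2 ≤ qf b u) (a : H →L[ℂ] H)
    (hK : IsCompactOperator ⇑(a - b)) (W : Submodule ℂ H)
    (hW : ∀ u ∈ W, u ≠ 0 → qf a u < 0) : FiniteDimensional ℂ W := by
  obtain ⟨N, hN⟩ := exists_bound_of_compact (a - b) hK hc
  exact (hN W (lower_of_neg hc hb a W hW)).1

lemma ker_fd {b : H →L[ℂ] H} {c : ℝ} (hc : 0 < c)
    (hb : ∀ u, c * ‖u‖ ^ 2 ≤ qf b u) (a : H →L[ℂ] H)
    (hK : IsCompactOperator ⇑(a - b)) : FiniteDimensional ℂ (LinearMap.ker (a : H →ₗ[ℂ] H)) := by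
  obtain ⟨N, hN⟩ := exists_bound_of_compact (a - b) hK hc
  refine (hN (LinearMap.ker (a : H →ₗ[ℂ] H)) ?_).1
  intro u hu
  have hau : a u = 0 := LinearMap.mem_ker.mp hu
  have h1 : (a - b) u = -(b u) := by
    simp [ContinuousLinearMap.sub_apply, hau]
  rw [h1, norm_neg]
  have h2 := hb u
  have h3 : qf b u ≤ ‖b u‖ * ‖u‖ := (le_abs_self _).trans (abs_qf_le _ _)
  rcases eq_or_ne u 0 with rfl | hu0
  · simp
  · have hpos : 0 < ‖u‖ := norm_pos_iff.mpr hu0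
    nlinarith

/-- The spectral gap lemma: a coercive-plus-compact operator is bounded below
on the orthogonal complement of its kernel. -/
lemma exists_gap {b : H →L[ℂ] H} {c : ℝ} (hc : 0 < c)
    (hb : ∀ u, c * ‖u‖ ^ 2 ≤ qf b u) (a : H →L[ℂ] H)
    (hK : IsCompactOperator ⇑(a - b)) :
    ∃ c' > (0 : ℝ), ∀ u ∈ (LinearMap.ker (a : H →ₗ[ℂ] H))ᗮ, c' * ‖u‖ ≤ ‖a u‖ := by
  by_contra hcon
  push_neg at hcon
  have hseq : ∀ n : ℕ, ∃ v : H, v ∈ (LinearMap.ker (a : H →ₗ[ℂ] H))ᗮ ∧ ‖v‖ = 1 ∧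
      ‖a v‖ < 1 / (n + 1) := by
    intro n
    obtain ⟨u, hu, hlt⟩ := hcon (1 / (n + 1)) (by positivity)
    have hu0 : u ≠ 0 := by
      rintro rfl
      simp at hlt
    have hpos : 0 < ‖u‖ := norm_pos_iff.mpr hu0
    refine ⟨(‖u‖⁻¹ : ℂ) • u, Submodule.smul_mem _ _ hu, ?_, ?_⟩
    · rw [norm_smul]
      simp [abs_of_pos hpos, inv_mul_cancel₀ hpos.ne']
    · rw [map_smul, norm_smul, norm_inv]
      have h' : ‖((‖u‖ : ℝ) : ℂ)‖ = ‖u‖ := by simp [abs_of_pos hpos]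
      rw [h', inv_mul_lt_iff₀ hpos]
      linarith [hlt, mul_comm ‖u‖ (1 / ((n : ℝ) + 1))]
  choose v hv1 hv2 hv3 using hseq
  obtain ⟨K, hKc, hKsub⟩ := hK.image_subset_compact_of_bounded
    (Metric.isBounded_closedBall (x := (0 : H)) (r := 1))
  have hvK : ∀ n, (a - b) (v n) ∈ K := fun n =>
    hKsub ⟨v n, by simp [Metric.mem_closedBall, dist_eq_norm, (hv2 n).le], rfl⟩
  obtain ⟨w, hwK, φ, hφ, hφtend⟩ := hKc.tendsto_subseq hvK
  have hφtop : Filter.Tendsto φ Filter.atTop Filter.atTop := hφ.tendsto_atTop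
  have hav0 : Filter.Tendsto (fun n => a (v n)) Filter.atTop (nhds 0) := by
    rw [tendsto_zero_iff_norm_tendsto_zero]
    refine squeeze_zero (fun n => norm_nonneg _) (fun n => (hv3 n).le) ?_
    exact tendsto_one_div_add_atTop_nhds_zero_nat
  have hav0' : Filter.Tendsto (fun n => a (v (φ n))) Filter.atTop (nhds 0) :=
    hav0.comp hφtop
  have hbv : Filter.Tendsto (fun n => b (v (φ n))) Filter.atTop (nhds (0 - w)) := by
    have : (fun n => b (v (φ n))) = fun n => a (v (φ n)) - (a - b) (v (φ n)) := by
      funext n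
      simp [ContinuousLinearMap.sub_apply]
    rw [this]
    exact hav0'.sub hφtend
  have hcauchyb : CauchySeq (fun n => b (v (φ n))) := hbv.cauchySeq
  have hcauchyv : CauchySeq (fun n => v (φ n)) := by
    rw [Metric.cauchySeq_iff]
    intro ε hε
    obtain ⟨N, hN⟩ := Metric.cauchySeq_iff.mp hcauchyb (c * ε) (by positivity)
    refine ⟨N, fun m hm n hn => ?_⟩
    have h1 := coercive_dist hc hb (v (φ m)) (v (φ n))
    have h2 := hN m hm n hn
    rw [dist_eq_norm] at *
    calc ‖v (φ m) - v (φ n)‖ ≤ c⁻¹ * ‖b (v (φ m)) - b (v (φ n))‖ := by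
          rw [le_inv_mul_iff₀ hc] at *
          linarith [h1]
      _ < c⁻¹ * (c * ε) := by
          apply mul_lt_mul_of_pos_left h2 (by positivity)
      _ = ε := by field_simp
  obtain ⟨u, hu⟩ := cauchySeq_tendsto_of_complete hcauchyv
  have hnorm : ‖u‖ = 1 := by
    have h1 : Filter.Tendsto (fun n => ‖v (φ n)‖) Filter.atTop (nhds ‖u‖) := hu.norm
    have h2 : (fun n => ‖v (φ n)‖) = fun _ => (1 : ℝ) := funext fun n => hv2 (φ n)
    rw [h2] at h1
    exact (tendsto_const_nhds_iff.mp h1).symm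
  have hker : u ∈ LinearMap.ker (a : H →ₗ[ℂ] H) := by
    rw [LinearMap.mem_ker]
    have h1 : Filter.Tendsto (fun n => a (v (φ n))) Filter.atTop (nhds (a u)) :=
      (a.continuous.tendsto u).comp hu
    exact tendsto_nhds_unique h1 hav0'
  have horth : u ∈ (LinearMap.ker (a : H →ₗ[ℂ] H))ᗮ := by
    have hclosed : IsClosed ((LinearMap.ker (a : H →ₗ[ℂ] H))ᗮ : Set H) := Submodule.isClosed_orthogonal _
    exact hclosed.mem_of_tendsto hu (Filter.Eventually.of_forall fun n => hv1 (φ n))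
  have : (inner ℂ u u : ℂ) = 0 := horth u hker
  rw [inner_self_eq_zero] at this
  rw [this, norm_zero] at hnorm
  exact absurd hnorm (by norm_num)


/-- Self-adjoint operators bounded below on the complement of their kernel have
no small nonzero real spectrum. -/
lemma spec_gap (a : H →L[ℂ] H) (ha : IsSelfAdjoint a) {c' : ℝ} (hc' : 0 < c')
    (hgap : ∀ u ∈ (LinearMap.ker (a : H →ₗ[ℂ] H))ᗮ, c' * ‖u‖ ≤ ‖a u‖) :
    ∀ x ∈ spectrum ℝ a, x = 0 ∨ c' ≤ |x| := by
  intro x hx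
  by_contra hcon
  push_neg at hcon
  obtain ⟨hx0, hxc⟩ := hcon
  have hxpos : 0 < |x| := abs_pos.mpr hx0
  set m : ℝ := min |x| (c' - |x|) with hm
  have hmpos : 0 < m := lt_min hxpos (by linarith)
  have hsym := ContinuousLinearMap.isSelfAdjoint_iff_isSymmetric.mp ha
  set M : H →L[ℂ] H := algebraMap ℝ (H →L[ℂ] H) x - a with hM
  have hMapp : ∀ u, M u = (x : ℂ) • u - a u := by
    intro u
    rw [hM]
    simp [ContinuousLinearMap.sub_apply, Algebra.algebraMap_eq_smul_one,
      ContinuousLinearMap.smul_apply]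
  haveI : CompleteSpace (LinearMap.ker (a : H →ₗ[ℂ] H)) :=
    (ContinuousLinearMap.isClosed_ker a).completeSpace_coe
  -- lower bound for M
  have hlow : ∀ u, m * ‖u‖ ≤ ‖M u‖ := by
    intro u
    set u₀ : H := (orthogonalProjection (LinearMap.ker (a : H →ₗ[ℂ] H)) u : H) with hu₀
    set u₁ : H := u - u₀ with hu₁
    have hu₀mem : u₀ ∈ LinearMap.ker (a : H →ₗ[ℂ] H) := Submodule.coe_mem _
    have hu₁mem : u₁ ∈ (LinearMap.ker (a : H →ₗ[ℂ] H))ᗮ := Submodule.sub_starProjection_mem_orthogonal u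
    have hadd : u = u₀ + u₁ := by rw [hu₁]; abel
    have hau₀ : a u₀ = 0 := LinearMap.mem_ker.mp hu₀mem
    have hau : a u = a u₁ := by rw [hadd, map_add, hau₀, zero_add]
    have hau₁mem : a u₁ ∈ (LinearMap.ker (a : H →ₗ[ℂ] H))ᗮ := by
      rw [Submodule.mem_orthogonal]
      intro w hw
      have h' := hsym w u₁
      simp only [ContinuousLinearMap.coe_coe] at h'
      rw [← h']
      simp [show a w = 0 from LinearMap.mem_ker.mp hw]
    have hdecomp : M u = (x : ℂ) • u₀ + ((x : ℂ) • u₁ - a u₁) := by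
      rw [hMapp, hau, hadd, smul_add]
      abel
    have hleft : (x : ℂ) • u₀ ∈ LinearMap.ker (a : H →ₗ[ℂ] H) := Submodule.smul_mem _ _ hu₀mem
    have hright : (x : ℂ) • u₁ - a u₁ ∈ (LinearMap.ker (a : H →ₗ[ℂ] H))ᗮ :=
      Submodule.sub_mem _ (Submodule.smul_mem _ _ hu₁mem) hau₁mem
    have hMsq : ‖M u‖ ^ 2 = ‖(x : ℂ) • u₀‖ ^ 2 + ‖(x : ℂ) • u₁ - a u₁‖ ^ 2 := by
      rw [hdecomp, pow_two, pow_two, pow_two]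
      exact norm_add_sq_eq_norm_sq_add_norm_sq_of_inner_eq_zero _ _
        (Submodule.inner_right_of_mem_orthogonal hleft hright)
    have husq : ‖u‖ ^ 2 = ‖u₀‖ ^ 2 + ‖u₁‖ ^ 2 := by
      rw [hadd, pow_two, pow_two, pow_two]
      exact norm_add_sq_eq_norm_sq_add_norm_sq_of_inner_eq_zero _ _
        (Submodule.inner_right_of_mem_orthogonal hu₀mem hu₁mem)
    have hn0 : ‖(x : ℂ) • u₀‖ = |x| * ‖u₀‖ := by
      rw [norm_smul]; simp
    have hn1 : (c' - |x|) * ‖u₁‖ ≤ ‖(x : ℂ) • u₁ - a u₁‖ := by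
      have h1 : ‖a u₁‖ - ‖(x : ℂ) • u₁‖ ≤ ‖(x : ℂ) • u₁ - a u₁‖ := by
        rw [norm_sub_rev]
        exact norm_sub_norm_le _ _
      have h2 : ‖(x : ℂ) • u₁‖ = |x| * ‖u₁‖ := by rw [norm_smul]; simp
      have h3 := hgap u₁ hu₁mem
      nlinarith [norm_nonneg u₁]
    have hsq : (m * ‖u‖) ^ 2 ≤ ‖M u‖ ^ 2 := by
      have hm1 : m ≤ |x| := min_le_left _ _
      have hm2 : m ≤ c' - |x| := min_le_right _ _
      have e0 : m ^ 2 * ‖u₀‖ ^ 2 ≤ ‖(x : ℂ) • u₀‖ ^ 2 := by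
        rw [hn0]
        have s1 : (m * ‖u₀‖) ^ 2 ≤ (|x| * ‖u₀‖) ^ 2 :=
          pow_le_pow_left₀ (by positivity) (mul_le_mul_of_nonneg_right hm1 (norm_nonneg u₀)) 2
        calc m ^ 2 * ‖u₀‖ ^ 2 = (m * ‖u₀‖) ^ 2 := by ring
          _ ≤ _ := s1
      have e1 : m ^ 2 * ‖u₁‖ ^ 2 ≤ ‖(x : ℂ) • u₁ - a u₁‖ ^ 2 := by
        have h4 : 0 ≤ (c' - |x|) * ‖u₁‖ := mul_nonneg (by linarith) (norm_nonneg _)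
        have s1 : (m * ‖u₁‖) ^ 2 ≤ ((c' - |x|) * ‖u₁‖) ^ 2 :=
          pow_le_pow_left₀ (by positivity) (mul_le_mul_of_nonneg_right hm2 (norm_nonneg u₁)) 2
        have s2 : ((c' - |x|) * ‖u₁‖) ^ 2 ≤ ‖(x : ℂ) • u₁ - a u₁‖ ^ 2 :=
          pow_le_pow_left₀ h4 hn1 2
        calc m ^ 2 * ‖u₁‖ ^ 2 = (m * ‖u₁‖) ^ 2 := by ring
          _ ≤ _ := s1.trans s2
      rw [hMsq]
      calc (m * ‖u‖) ^ 2 = m ^ 2 * (‖u₀‖ ^ 2 + ‖u₁‖ ^ 2) := by rw [← husq]; ring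
        _ ≤ ‖(x : ℂ) • u₀‖ ^ 2 + ‖(x : ℂ) • u₁ - a u₁‖ ^ 2 := by
            rw [mul_add]; exact add_le_add e0 e1
    have h5 : 0 ≤ m * ‖u‖ := by positivity
    have := Real.sqrt_le_sqrt hsq
    rwa [Real.sqrt_sq h5, Real.sqrt_sq (norm_nonneg _)] at this
  -- M is a unit
  have hker : LinearMap.ker (M : H →ₗ[ℂ] H) = ⊥ := by
    rw [Submodule.eq_bot_iff]
    intro u hu
    rw [LinearMap.mem_ker, ContinuousLinearMap.coe_coe] at hu
    have h1 := hlow u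
    rw [hu, norm_zero] at h1
    have h2 : ‖u‖ ≤ 0 := by nlinarith
    exact norm_eq_zero.mp (le_antisymm h2 (norm_nonneg u))
  have hmninv : (0 : ℝ) ≤ m⁻¹ := by positivity
  have hanti : AntilipschitzWith ⟨m⁻¹, hmninv⟩ ⇑M :=
    M.antilipschitz_of_bound (fun u => by
      show ‖u‖ ≤ m⁻¹ * ‖M u‖
      rw [le_inv_mul_iff₀ hmpos]
      exact hlow u)
  have hclosed : IsClosed (Set.range ⇑M) := hanti.isClosed_range M.uniformContinuous
  have hMsa : IsSelfAdjoint M := by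
    rw [hM]
    refine IsSelfAdjoint.sub ?_ ha
    rw [IsSelfAdjoint, Algebra.algebraMap_eq_smul_one, star_smul, star_one, star_trivial]
  have hMsym := ContinuousLinearMap.isSelfAdjoint_iff_isSymmetric.mp hMsa
  have hclosed' : IsClosed ((LinearMap.range (M : H →ₗ[ℂ] H) : Submodule ℂ H) : Set H) := by
    rwa [LinearMap.coe_range]
  haveI : CompleteSpace (LinearMap.range (M : H →ₗ[ℂ] H)) := hclosed'.completeSpace_coe
  have horth : (LinearMap.range (M : H →ₗ[ℂ] H))ᗮ = ⊥ := by
    rw [Submodule.eq_bot_iff]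
    intro u hu
    rw [Submodule.mem_orthogonal] at hu
    have h1 : ∀ z : H, (inner ℂ z (M u) : ℂ) = 0 := by
      intro z
      have h' := hMsym z u
      simp only [ContinuousLinearMap.coe_coe] at h'
      rw [← h']
      exact hu (M z) ⟨z, rfl⟩
    have h2 : M u = 0 := by
      have := h1 (M u)
      rwa [inner_self_eq_zero] at this
    have : u ∈ LinearMap.ker (M : H →ₗ[ℂ] H) := LinearMap.mem_ker.mpr h2
    rw [hker] at this
    exact this
  have hrange : LinearMap.range (M : H →ₗ[ℂ] H) = ⊤ := Submodule.orthogonal_eq_bot_iff.mp horth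
  have hunit : IsUnit M := by
    let e := ContinuousLinearEquiv.ofBijective M hker hrange
    have hcoe : ∀ u : H, M u = e u := fun u =>
      (congrFun (ContinuousLinearEquiv.coeFn_ofBijective M hker hrange) u).symm
    refine ⟨⟨M, (e.symm : H →L[ℂ] H), ?_, ?_⟩, rfl⟩
    · ext u
      simp only [ContinuousLinearMap.mul_apply, ContinuousLinearMap.one_apply,
        ContinuousLinearMap.coe_coe, ContinuousLinearEquiv.coe_coe]
      rw [hcoe, e.apply_symm_apply]
    · ext u
      simp only [ContinuousLinearMap.mul_apply, ContinuousLinearMap.one_apply,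
        ContinuousLinearMap.coe_coe, ContinuousLinearEquiv.coe_coe]
      rw [hcoe, e.symm_apply_apply]
  rw [spectrum.mem_iff] at hx
  exact hx hunit


lemma qf_neg' (a : H →L[ℂ] H) (u : H) : qf (-a) u = -qf a u := by
  simp [qf, inner_neg_left]

lemma qf_sub' (a b : H →L[ℂ] H) (u : H) : qf (a - b) u = qf a u - qf b u := qf_sub a b u

lemma qf_algebraMap (r : ℝ) (u : H) : qf (algebraMap ℝ (H →L[ℂ] H) r) u = r * ‖u‖ ^ 2 := by
  rw [qf, Algebra.algebraMap_eq_smul_one]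
  have h1 : (r • (1 : H →L[ℂ] H)) u = (r : ℂ) • u := by
    simp [ContinuousLinearMap.smul_apply]
  rw [h1, inner_smul_left]
  simp [Complex.conj_ofReal, Complex.re_ofReal_mul, ← inner_self_eq_norm_sq (𝕜 := ℂ)]

/-- Non-negativity of the form of `cfc g a` for `g` non-negative on the spectrum. -/
lemma cfc_form_nonneg (a : H →L[ℂ] H) (ha : IsSelfAdjoint a) (g : ℝ → ℝ) (hg : Continuous g)
    (hg0 : ∀ x ∈ spectrum ℝ a, 0 ≤ g x) (u : H) :
    0 ≤ qf (cfc g a) u := by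
  have hscont : Continuous (fun x => Real.sqrt (g x)) := Real.continuous_sqrt.comp hg
  have h1 : cfc g a = cfc (fun x => Real.sqrt (g x)) a * cfc (fun x => Real.sqrt (g x)) a := by
    rw [← cfc_mul (fun x => Real.sqrt (g x)) (fun x => Real.sqrt (g x)) a
      hscont.continuousOn hscont.continuousOn]
    exact cfc_congr (fun x hx => (Real.mul_self_sqrt (hg0 x hx)).symm)
  have h2 : IsSelfAdjoint (cfc (fun x => Real.sqrt (g x)) a) :=
    cfc_predicate (fun x => Real.sqrt (g x)) a
  have hsymm := ContinuousLinearMap.isSelfAdjoint_iff_isSymmetric.mp h2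
  rw [qf, h1, ContinuousLinearMap.mul_apply]
  have h3 := hsymm ((cfc (fun x => Real.sqrt (g x)) a) u) u
  simp only [ContinuousLinearMap.coe_coe] at h3
  rw [h3]
  have := inner_self_nonneg (𝕜 := ℂ) (x := (cfc (fun x => Real.sqrt (g x)) a) u)
  simpa using this

/-- If `p * g²` is non-negative on the spectrum and `w` is fixed by `cfc g a`,
then the form of `cfc p a` is non-negative at `w`. -/
lemma qf_bound_on_range (a : H →L[ℂ] H) (ha : IsSelfAdjoint a) (g p : ℝ → ℝ)
    (hg : Continuous g) (hp : Continuous p)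
    (hnn : ∀ x ∈ spectrum ℝ a, 0 ≤ p x * (g x * g x)) (w : H) (hw : (cfc g a) w = w) :
    0 ≤ qf (cfc p a) w := by
  have h1 : cfc (fun x => p x * (g x * g x)) a = cfc p a * (cfc g a * cfc g a) := by
    rw [← cfc_mul g g a hg.continuousOn hg.continuousOn,
      ← cfc_mul p (fun x => g x * g x) a hp.continuousOn
        (hg.continuousOn.mul hg.continuousOn)]
  have h2 := cfc_form_nonneg a ha (fun x => p x * (g x * g x))
    (hp.mul (hg.mul hg)) hnn w
  rw [h1] at h2
  simpa [qf, ContinuousLinearMap.mul_apply, hw] using h2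


/-- The key counting lemma: if the form of `a` is `< c'‖u‖²` on a finite-dimensional
subspace `W`, where `c'` is a spectral gap for `a`, then
`dim W ≤ nu a + dim ker a`. -/
lemma dim_le {b : H →L[ℂ] H} {c : ℝ} (hc : 0 < c) (hb : ∀ u, c * ‖u‖ ^ 2 ≤ qf b u)
    (a : H →L[ℂ] H) (ha : IsSelfAdjoint a) (hK : IsCompactOperator ⇑(a - b))
    {c' : ℝ} (hc' : 0 < c') (hspec : ∀ x ∈ spectrum ℝ a, x = 0 ∨ c' ≤ |x|)
    (W : Submodule ℂ H) (hWfd : FiniteDimensional ℂ W)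
    (hW : ∀ u ∈ W, u ≠ 0 → qf a u < c' * ‖u‖ ^ 2) :
    finrank ℂ W ≤ nu a + finrank ℂ (LinearMap.ker (a : H →ₗ[ℂ] H)) := by
  haveI := hWfd
  have hcase : ∀ x ∈ spectrum ℝ a, x = 0 ∨ x ≤ -c' ∨ c' ≤ x := by
    intro x hx
    rcases hspec x hx with h | h
    · exact Or.inl h
    · rcases abs_cases x with ⟨he, _⟩ | ⟨he, _⟩
      · right; right; linarith
      · right; left; linarith
  -- the bump functions
  set f : ℝ → ℝ := fun x => min 1 (max 0 ((-x - c' / 2) * (2 / c'))) with hfdef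
  set e : ℝ → ℝ := fun x => max 0 (1 - |x| * (2 / c')) with hedef
  have hfcont : Continuous f := by
    apply continuous_const.min
    apply continuous_const.max
    exact (continuous_id.neg.sub continuous_const).mul continuous_const
  have hecont : Continuous e := by
    apply continuous_const.max
    exact continuous_const.sub (continuous_abs.mul continuous_const)
  have hf_nonneg : ∀ x : ℝ, 0 ≤ x → f x = 0 := by
    intro x hx
    have h1 : (-x - c' / 2) * (2 / c') < 0 := by
      apply mul_neg_of_neg_of_pos (by linarith) (by positivity)
    simp only [hfdef]
    rw [max_eq_left h1.le, min_eq_right (by norm_num)]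
  have hf_neg : ∀ x : ℝ, x ≤ -c' → f x = 1 := by
    intro x hx
    have h1 : (1 : ℝ) ≤ (-x - c' / 2) * (2 / c') := by
      have h2 : c' / 2 ≤ -x - c' / 2 := by linarith
      calc (1 : ℝ) = (c' / 2) * (2 / c') := by field_simp
        _ ≤ (-x - c' / 2) * (2 / c') := by
            apply mul_le_mul_of_nonneg_right h2 (by positivity)
    simp only [hfdef]
    rw [max_eq_right (by linarith), min_eq_left h1]
  have he_zero : e 0 = 1 := by
    simp only [hedef, abs_zero, zero_mul, sub_zero]
    norm_num
  have he_out : ∀ x : ℝ, c' ≤ |x| → e x = 0 := by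
    intro x hx
    have h1 : (2 : ℝ) ≤ |x| * (2 / c') := by
      calc (2 : ℝ) = c' * (2 / c') := by field_simp
        _ ≤ |x| * (2 / c') := mul_le_mul_of_nonneg_right hx (by positivity)
    simp only [hedef]
    rw [max_eq_left (by linarith)]
  set h : ℝ → ℝ := fun x => f x + e x with hhdef
  have hhcont : Continuous h := hfcont.add hecont
  -- pointwise identities on the spectrum
  have hff : (spectrum ℝ a).EqOn (fun x => f x * f x) f := by
    intro x hx
    rcases hcase x hx with rfl | hx' | hx'
    · simp [hf_nonneg 0 le_rfl]
    · simp [hf_neg x hx']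
    · simp [hf_nonneg x (by linarith)]
  have hhh : (spectrum ℝ a).EqOn (fun x => h x * h x) h := by
    intro x hx
    rcases hcase x hx with rfl | hx' | hx'
    · simp only [hhdef, hf_nonneg 0 le_rfl, he_zero]; norm_num
    · have hax : c' ≤ |x| := by rw [abs_of_nonpos (by linarith)]; linarith
      simp only [hhdef, hf_neg x hx', he_out x hax]; norm_num
    · have hax : c' ≤ |x| := by rw [abs_of_nonneg (by linarith)]; linarith
      simp only [hhdef, hf_nonneg x (by linarith), he_out x hax]; norm_num
  have hxe : (spectrum ℝ a).EqOn (fun x => x * e x) (fun _ => (0 : ℝ)) := by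
    intro x hx
    rcases hcase x hx with rfl | hx' | hx'
    · simp
    · have hax : c' ≤ |x| := by rw [abs_of_nonpos (by linarith)]; linarith
      simp [he_out x hax]
    · have hax : c' ≤ |x| := by rw [abs_of_nonneg (by linarith)]; linarith
      simp [he_out x hax]
  -- the operators
  set Pm := cfc f a with hPm
  set E := cfc e a with hE
  set R := cfc h a with hR
  have hPmIdem : Pm * Pm = Pm := by
    rw [hPm, ← cfc_mul f f a hfcont.continuousOn hfcont.continuousOn]
    exact cfc_congr hff
  have hRIdem : R * R = R := by
    rw [hR, ← cfc_mul h h a hhcont.continuousOn hhcont.continuousOn]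
    exact cfc_congr hhh
  have hR_eq : R = Pm + E := by
    rw [hR, hPm, hE, hhdef]
    exact cfc_add a f e hfcont.continuousOn hecont.continuousOn
  have haE : ∀ u, a (E u) = 0 := by
    intro u
    have h1 : cfc (fun x : ℝ => x * e x) a = a * E := by
      rw [cfc_mul (fun x : ℝ => x) e a continuous_id.continuousOn hecont.continuousOn,
        cfc_id' ℝ a]
    have h2 : cfc (fun x : ℝ => x * e x) a = 0 := by
      rw [cfc_congr hxe, cfc_const 0 a, map_zero]
    have h3 : a * E = 0 := by rw [← h1, h2]
    calc a (E u) = (a * E) u := rfl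
      _ = 0 := by rw [h3]; rfl
  -- form bounds
  have hPm_neg : ∀ w : H, Pm w = w → qf a w ≤ -(c' * ‖w‖ ^ 2) := by
    intro w hw
    have hnn : ∀ x ∈ spectrum ℝ a, 0 ≤ (-x - c') * (f x * f x) := by
      intro x hx
      rcases hcase x hx with rfl | hx' | hx'
      · simp [hf_nonneg 0 le_rfl]
      · rw [hf_neg x hx']
        nlinarith
      · simp [hf_nonneg x (by linarith)]
    have h0 := qf_bound_on_range a ha f (fun x => -x - c') hfcont
      (continuous_id.neg.sub continuous_const) hnn w hw
    have h1 : cfc (fun x : ℝ => -x - c') a = -a - algebraMap ℝ (H →L[ℂ] H) c' := by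
      rw [cfc_sub (fun x : ℝ => -x) (fun _ => c') a
        continuous_id.neg.continuousOn continuous_const.continuousOn,
        cfc_const c' a]
      congr 1
      exact cfc_neg_id a
    rw [h1, qf_sub', qf_neg', qf_algebraMap] at h0
    linarith
  have hQ_pos : ∀ w : H, R w = 0 → c' * ‖w‖ ^ 2 ≤ qf a w := by
    intro w hw
    set q : ℝ → ℝ := fun x => 1 - h x with hqdef
    have hqcont : Continuous q := continuous_const.sub hhcont
    have hqa : cfc q a = 1 - R := by
      rw [hqdef, cfc_sub (fun _ => (1:ℝ)) h a
        continuous_const.continuousOn hhcont.continuousOn, hR]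
      congr 1
      rw [cfc_const 1 a, map_one]
    have hwq : (cfc q a) w = w := by
      rw [hqa]
      simp [ContinuousLinearMap.sub_apply, hw]
    have hnn : ∀ x ∈ spectrum ℝ a, 0 ≤ (x - c') * (q x * q x) := by
      intro x hx
      rcases hcase x hx with rfl | hx' | hx'
      · simp [hqdef, hhdef, hf_nonneg 0 le_rfl, he_zero]
      · have hax : c' ≤ |x| := by rw [abs_of_nonpos (by linarith)]; linarith
        simp [hqdef, hhdef, hf_neg x hx', he_out x hax]
      · have hax : c' ≤ |x| := by rw [abs_of_nonneg (by linarith)]; linarith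
        have : q x = 1 := by
          simp [hqdef, hhdef, hf_nonneg x (by linarith), he_out x hax]
        rw [this]
        nlinarith
    have h0 := qf_bound_on_range a ha q (fun x => x - c') hqcont
      (continuous_id.sub continuous_const) hnn w hwq
    have h1 : cfc (fun x : ℝ => x - c') a = a - algebraMap ℝ (H →L[ℂ] H) c' := by
      rw [cfc_sub (fun x : ℝ => x) (fun _ => c') a
        continuous_id.continuousOn continuous_const.continuousOn,
        cfc_const c' a, cfc_id' ℝ a]
    rw [h1, qf_sub', qf_algebraMap] at h0
    linarith
  -- rank bounds
  haveI hkerfd : FiniteDimensional ℂ (LinearMap.ker (a : H →ₗ[ℂ] H)) := ker_fd hc hb a hK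
  have hPmrange_neg : ∀ u ∈ LinearMap.range (Pm : H →ₗ[ℂ] H), u ≠ 0 → qf a u < 0 := by
    intro u hu hu0
    obtain ⟨v, rfl⟩ := hu
    simp only [ContinuousLinearMap.coe_coe] at hu0 ⊢
    have hfix : Pm (Pm v) = Pm v := by
      calc Pm (Pm v) = (Pm * Pm) v := rfl
        _ = Pm v := by rw [hPmIdem]
    have := hPm_neg (Pm v) hfix
    have hn : 0 < ‖Pm v‖ := norm_pos_iff.mpr hu0
    nlinarith [mul_pos hc' (pow_pos hn 2)]
  haveI hPmfd : FiniteDimensional ℂ (LinearMap.range (Pm : H →ₗ[ℂ] H)) :=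
    negdims_fd hc hb a hK _ hPmrange_neg
  have hPm_le_nu : finrank ℂ (LinearMap.range (Pm : H →ₗ[ℂ] H)) ≤ nu a :=
    le_csSup (negdims_bddAbove hc hb a hK)
      ⟨LinearMap.range (Pm : H →ₗ[ℂ] H), hPmfd, rfl, hPmrange_neg⟩
  have hErange : LinearMap.range (E : H →ₗ[ℂ] H) ≤ LinearMap.ker (a : H →ₗ[ℂ] H) := by
    rintro _ ⟨u, rfl⟩
    exact LinearMap.mem_ker.mpr (haE u)
  haveI hEfd : FiniteDimensional ℂ (LinearMap.range (E : H →ₗ[ℂ] H)) :=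
    Submodule.finiteDimensional_of_le hErange
  have hRrange_le : LinearMap.range (R : H →ₗ[ℂ] H) ≤ LinearMap.range (Pm : H →ₗ[ℂ] H) ⊔ LinearMap.range (E : H →ₗ[ℂ] H) := by
    rintro _ ⟨u, rfl⟩
    have : R u = Pm u + E u := by rw [hR_eq]; rfl
    rw [ContinuousLinearMap.coe_coe, this]
    exact Submodule.add_mem_sup (LinearMap.mem_range_self _ u) (LinearMap.mem_range_self _ u)
  haveI : FiniteDimensional ℂ ((LinearMap.range (Pm : H →ₗ[ℂ] H) ⊔ LinearMap.range (E : H →ₗ[ℂ] H) : Submodule ℂ H)) :=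
    Submodule.finiteDimensional_sup _ _
  haveI hRfd : FiniteDimensional ℂ (LinearMap.range (R : H →ₗ[ℂ] H)) :=
    Submodule.finiteDimensional_of_le hRrange_le
  -- injection of W into range R
  set φ : W →ₗ[ℂ] (LinearMap.range (R : H →ₗ[ℂ] H)) :=
    LinearMap.codRestrict (LinearMap.range (R : H →ₗ[ℂ] H)) ((R : H →ₗ[ℂ] H).comp W.subtype)
      (fun w => LinearMap.mem_range_self _ _) with hφ
  have hφinj : Function.Injective φ := by
    rw [← LinearMap.ker_eq_bot, Submodule.eq_bot_iff]
    intro u hu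
    have h1 : R u.1 = 0 := by
      have := congrArg Subtype.val (LinearMap.mem_ker.mp hu)
      exact this
    by_contra hu0
    have hu1 : (u : H) ≠ 0 := fun hh => hu0 (Subtype.ext hh)
    have h2 := hQ_pos u.1 h1
    have h3 := hW u.1 u.2 hu1
    linarith
  calc finrank ℂ W ≤ finrank ℂ (LinearMap.range (R : H →ₗ[ℂ] H)) :=
        LinearMap.finrank_le_finrank_of_injective hφinj
    _ ≤ finrank ℂ ((LinearMap.range (Pm : H →ₗ[ℂ] H) ⊔ LinearMap.range (E : H →ₗ[ℂ] H) : Submodule ℂ H)) :=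
        Submodule.finrank_mono hRrange_le
    _ ≤ finrank ℂ (LinearMap.range (Pm : H →ₗ[ℂ] H)) + finrank ℂ (LinearMap.range (E : H →ₗ[ℂ] H)) := by
        have := Submodule.finrank_sup_add_finrank_inf_eq (LinearMap.range (Pm : H →ₗ[ℂ] H))
          (LinearMap.range (E : H →ₗ[ℂ] H))
        omega
    _ ≤ nu a + finrank ℂ (LinearMap.ker (a : H →ₗ[ℂ] H)) :=
        Nat.add_le_add hPm_le_nu (Submodule.finrank_mono hErange)


lemma nu_eq_zero_of_pos (a : H →L[ℂ] H) (hpos : ∀ u : H, u ≠ 0 → 0 < qf a u) : nu a = 0 := by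
  have hset : negdims a = {0} := by
    ext n
    constructor
    · rintro ⟨W, hWfd, rfl, hWneg⟩
      haveI := hWfd
      rw [Set.mem_singleton_iff]
      by_contra hn
      have hnt : Nontrivial W := by
        rw [← Module.finrank_pos_iff (R := ℂ)]
        omega
      obtain ⟨u, hu⟩ := exists_ne (0 : W)
      have hne : (u : H) ≠ 0 := fun hh => hu (Subtype.ext hh)
      exact absurd (hpos u.1 hne) (not_lt.mpr (hWneg u.1 u.2 hne).le)
    · rintro rfl
      exact zero_mem_negdims a
  rw [nu, hset, csSup_singleton]

lemma nu_lsc {b : H →L[ℂ] H} {c : ℝ} (hc : 0 < c) (hb : ∀ u, c * ‖u‖ ^ 2 ≤ qf b u)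
    (a : H →L[ℂ] H) (hK : IsCompactOperator ⇑(a - b)) :
    ∃ δ > (0 : ℝ), ∀ a' : H →L[ℂ] H, IsCompactOperator ⇑(a' - b) → ‖a' - a‖ < δ →
      nu a ≤ nu a' := by
  have hbdd := negdims_bddAbove hc hb a hK
  have hne : (negdims a).Nonempty := ⟨0, zero_mem_negdims a⟩
  have hmem : nu a ∈ negdims a := Nat.sSup_mem hne hbdd
  obtain ⟨W, hWfd, hWrank, hWneg⟩ := hmem
  rcases Nat.eq_zero_or_pos (nu a) with h0 | hposn
  · exact ⟨1, one_pos, fun a' _ _ => h0 ▸ Nat.zero_le _⟩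
  haveI := hWfd
  have hWnontriv : Nontrivial W := by
    rw [← Module.finrank_pos_iff (R := ℂ)]
    omega
  have hsphere : IsCompact (Metric.sphere (0 : W) 1) := isCompact_sphere 0 1
  have hsne : (Metric.sphere (0 : W) 1).Nonempty := by
    obtain ⟨v, hv⟩ := exists_ne (0 : W)
    have hvn : (0 : ℝ) < ‖v‖ := norm_pos_iff.mpr hv
    have hvn' : (0 : ℝ) < ‖(v : H)‖ := hvn
    refine ⟨(‖v‖⁻¹ : ℂ) • v, ?_⟩
    simp [norm_smul, abs_of_pos hvn, inv_mul_cancel₀ hvn'.ne']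
  have hFcont : Continuous (fun u : W => qf a u.1) := by
    apply Complex.continuous_re.comp
    exact Continuous.inner (𝕜 := ℂ) (a.continuous.comp continuous_subtype_val) continuous_subtype_val
  obtain ⟨u0, hu0mem, hu0max⟩ := hsphere.exists_isMaxOn hsne hFcont.continuousOn
  have hu0ne : (u0 : H) ≠ 0 := by
    intro hh
    have : ‖(u0 : H)‖ = 1 := by
      have := Metric.mem_sphere.mp hu0mem
      rwa [dist_zero_right] at this
    rw [hh, norm_zero] at this
    norm_num at this
  set δ : ℝ := -qf a u0.1 with hδ
  have hδpos : 0 < δ := by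
    have := hWneg u0.1 u0.2 hu0ne
    linarith
  refine ⟨δ, hδpos, fun a' hK' hnear => ?_⟩
  have hneg' : ∀ u ∈ W, u ≠ 0 → qf a' u < 0 := by
    intro u hu hu0
    have hn : (0 : ℝ) < ‖u‖ := norm_pos_iff.mpr hu0
    set w : H := ((‖u‖⁻¹ : ℝ) : ℂ) • u with hw
    have hwW : w ∈ W := Submodule.smul_mem _ _ hu
    have hwn : ‖w‖ = 1 := by
      rw [hw, norm_smul]
      rw [show ‖((‖u‖⁻¹ : ℝ) : ℂ)‖ = ‖u‖⁻¹ by simp [abs_of_pos hn]]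
      field_simp
    have hwsph : (⟨w, hwW⟩ : W) ∈ Metric.sphere (0 : W) 1 := by
      simp only [Metric.mem_sphere, dist_zero_right]
      exact hwn
    have hmax := hu0max hwsph
    have h1 : qf a w ≤ -δ := by
      simpa [hδ] using hmax
    have h2 : qf a' w ≤ qf a w + ‖a' - a‖ * ‖w‖ ^ 2 := qf_le_add a' a w
    have h3 : qf a' w < 0 := by
      rw [hwn] at h2
      nlinarith
    have h4 : u = ((‖u‖ : ℝ) : ℂ) • w := by
      rw [hw, smul_smul, ← Complex.ofReal_mul, mul_inv_cancel₀ hn.ne',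
        Complex.ofReal_one, one_smul]
    have h5 : qf a' u = ‖u‖ ^ 2 * qf a' w := by
      conv_lhs => rw [h4]
      exact qf_smul a' ‖u‖ w
    rw [h5]
    exact mul_neg_of_pos_of_neg (by positivity) h3
  have : nu a ∈ negdims a' := ⟨W, hWfd, hWrank, hneg'⟩
  exact le_csSup (negdims_bddAbove hc hb a' hK') this

lemma nu_jump {b : H →L[ℂ] H} {c : ℝ} (hc : 0 < c) (hb : ∀ u, c * ‖u‖ ^ 2 ≤ qf b u)
    (a : H →L[ℂ] H) (ha : IsSelfAdjoint a) (hK : IsCompactOperator ⇑(a - b))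
    {c' : ℝ} (hc' : 0 < c') (hspec : ∀ x ∈ spectrum ℝ a, x = 0 ∨ c' ≤ |x|)
    (a' : H →L[ℂ] H) (hnear : ‖a - a'‖ ≤ c' / 2) :
    nu a' ≤ nu a + finrank ℂ (LinearMap.ker (a : H →ₗ[ℂ] H)) := by
  apply csSup_le ⟨0, zero_mem_negdims a'⟩
  rintro n ⟨W, hWfd, rfl, hWneg⟩
  apply dim_le hc hb a ha hK hc' hspec W hWfd
  intro u hu hu0
  have h1 := qf_le_add a a' u
  have h2 := hWneg u hu hu0
  have hn : (0 : ℝ) < ‖u‖ := norm_pos_iff.mpr hu0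
  have h3 : ‖a - a'‖ * ‖u‖ ^ 2 ≤ (c' / 2) * ‖u‖ ^ 2 :=
    mul_le_mul_of_nonneg_right hnear (by positivity)
  nlinarith [mul_pos hc' (pow_pos hn 2)]

/-- Local-to-global monotonicity for integer-valued functions on an interval. -/
lemma int_mono {a b : ℝ} (hab : a ≤ b) (F : ℝ → ℤ)
    (hloc : ∀ k ∈ Set.Icc a b, ∃ ε > (0 : ℝ), ∀ k' ∈ Set.Icc a b, |k' - k| < ε →
      (k' ≤ k → F k ≤ F k') ∧ (k ≤ k' → F k' ≤ F k)) :
    F b ≤ F a := by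
  set B : Set ℝ := {t | t ∈ Set.Icc a b ∧ ∀ u ∈ Set.Icc a t, F u ≤ F a} with hB
  have haB : a ∈ B := ⟨⟨le_rfl, hab⟩, fun u hu => by
    have : u = a := le_antisymm hu.2 hu.1
    rw [this]⟩
  have hBne : B.Nonempty := ⟨a, haB⟩
  have hBbdd : BddAbove B := ⟨b, fun t ht => ht.1.2⟩
  set s := sSup B with hs
  have hsmem : s ∈ Set.Icc a b := ⟨le_csSup hBbdd haB, csSup_le hBne (fun t ht => ht.1.2)⟩
  obtain ⟨ε, hε, hloc'⟩ := hloc s hsmem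
  have h2 : F s ≤ F a := by
    rcases eq_or_lt_of_le hsmem.1 with heq | hlt
    · rw [← heq]
    · have hpos : 0 < min ε (s - a) := lt_min hε (by linarith)
      obtain ⟨t, htB, hts⟩ := exists_lt_of_lt_csSup hBne
        (show s - min ε (s - a) < s by linarith)
      have hts' : t ≤ s := le_csSup hBbdd htB
      have htIcc : t ∈ Set.Icc a b := htB.1
      have habs : |t - s| < ε := by
        rw [abs_sub_lt_iff]
        have h5 := min_le_left ε (s - a)
        constructor <;> linarith
      exact ((hloc' t htIcc habs).1 hts').trans (htB.2 t ⟨htIcc.1, le_rfl⟩)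
  have h1 : ∀ u, a ≤ u → u < s → F u ≤ F a := by
    intro u hau hus
    obtain ⟨t, htB, htu⟩ := exists_lt_of_lt_csSup hBne hus
    exact htB.2 u ⟨hau, htu.le⟩
  have h3 : s = b := by
    by_contra hne
    have hsb : s < b := lt_of_le_of_ne hsmem.2 hne
    set k' := min b (s + ε / 2) with hk'
    have hak' : a ≤ k' := le_min hab (by linarith [hsmem.1])
    have hk'Icc : k' ∈ Set.Icc a b := ⟨hak', min_le_left _ _⟩
    have hsk' : s < k' := lt_min hsb (by linarith)
    have hk's : k' ≤ s + ε / 2 := min_le_right _ _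
    have habs : |k' - s| < ε := by
      rw [abs_sub_lt_iff]
      constructor <;> linarith
    have hFk' : F k' ≤ F a := ((hloc' k' hk'Icc habs).2 hsk'.le).trans h2
    have hk'B : k' ∈ B := by
      refine ⟨hk'Icc, fun u hu => ?_⟩
      rcases lt_trichotomy u s with hus | hus | hus
      · exact h1 u hu.1 hus
      · rw [hus]; exact h2
      · have huIcc : u ∈ Set.Icc a b := ⟨hu.1, hu.2.trans hk'Icc.2⟩
        have habsu : |u - s| < ε := by
          rw [abs_sub_lt_iff]
          constructor <;> linarith [hu.2]
        exact ((hloc' u huIcc habsu).2 hus.le).trans h2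
    have := le_csSup hBbdd hk'B
    linarith
  rw [← h3]
  exact h2

end Thm46

open Thm46

/-- Abstract content of Theorem 4.6 of the paper: if a norm-continuous family
`L k` of self-adjoint bounded operators on a complex Hilbert space has `L 0`
coercive, `L k - L 0` compact, `L α` positive for some `α > 0`, and for every
`m` is non-positive on some `m`-dimensional subspace at some `β_m > α`, then
the set of `k > 0` at which `L k` has a non-trivial kernel is infinite. -/
theorem infinitely_many_eigenvalues
    {H : Type*} [NormedAddCommGroup H] [InnerProductSpace ℂ H] [CompleteSpace H]
    (L : ℝ → H →L[ℂ] H)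
    (hsa : ∀ k ≥ (0 : ℝ), ∀ u v : H, (inner ℂ ((L k) u) v : ℂ) = inner ℂ u ((L k) v))
    (hcont : ContinuousOn L (Set.Ici (0 : ℝ)))
    (hcoer : ∃ c > (0 : ℝ), ∀ u : H, c * ‖u‖ ^ 2 ≤ (inner ℂ ((L 0) u) u : ℂ).re)
    (hcomp : ∀ k ≥ (0 : ℝ), IsCompactOperator (⇑(L k - L 0)))
    (α : ℝ) (hα : 0 < α)
    (hpos : ∀ u : H, u ≠ 0 → 0 < (inner ℂ ((L α) u) u : ℂ).re)
    (hneg : ∀ m : ℕ, ∃ β > α, ∃ W : Submodule ℂ H,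
      Module.finrank ℂ W = m ∧ ∀ u ∈ W, (inner ℂ ((L β) u) u : ℂ).re ≤ 0) :
    {k : ℝ | 0 < k ∧ LinearMap.ker (L k : H →ₗ[ℂ] H) ≠ ⊥}.Infinite := by
  classical
  by_contra hfin
  rw [Set.not_infinite] at hfin
  obtain ⟨c, hcpos, hb⟩ := hcoer
  have hb' : ∀ u : H, c * ‖u‖ ^ 2 ≤ qf (L 0) u := hb
  set Sfin := hfin.toFinset with hSfin
  set d : ℝ → ℕ := fun k => finrank ℂ (LinearMap.ker (L k : H →ₗ[ℂ] H)) with hd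
  set D : ℕ := ∑ s ∈ Sfin, d s with hD
  set m : ℕ := 2 * D + 1 with hm
  obtain ⟨β, hβα, W, hWrank, hWneg⟩ := hneg m
  have hβ0 : (0 : ℝ) < β := hα.trans hβα
  have hsa' : ∀ k ≥ (0 : ℝ), IsSelfAdjoint (L k) := fun k hk =>
    ContinuousLinearMap.isSelfAdjoint_iff_isSymmetric.mpr (fun u v => hsa k hk u v)
  set F : ℝ → ℤ := fun k =>
    (nu (L k) : ℤ) - ∑ s ∈ Sfin.filter (fun s => α ≤ s ∧ s < k), (d s : ℤ) with hF
  have hloc : ∀ k ∈ Set.Icc α β, ∃ ε > (0 : ℝ), ∀ k' ∈ Set.Icc α β, |k' - k| < ε →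
      (k' ≤ k → F k ≤ F k') ∧ (k ≤ k' → F k' ≤ F k) := by
    intro k hk
    have hk0 : (0 : ℝ) ≤ k := (hα.trans_le hk.1).le
    have hsak := hsa' k hk0
    have hKk := hcomp k hk0
    obtain ⟨c', hc', hgap⟩ := exists_gap hcpos hb' (L k) hKk
    have hspec := spec_gap (L k) hsak hc' hgap
    obtain ⟨δ, hδ, hlsc⟩ := nu_lsc hcpos hb' (L k) hKk
    have hcw : ContinuousWithinAt L (Set.Ici (0 : ℝ)) k := hcont k hk0
    rw [Metric.continuousWithinAt_iff] at hcw
    obtain ⟨ε₁, hε₁, hcw'⟩ := hcw (min δ (c' / 2)) (by positivity)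
    obtain ⟨ε₂, hε₂, hsep⟩ : ∃ ε₂ > (0 : ℝ), ∀ s ∈ Sfin, s ≠ k → ε₂ ≤ |s - k| := by
      rcases (Sfin.erase k).eq_empty_or_nonempty with hT | hT
      · refine ⟨1, one_pos, fun s hs hsk => absurd (Finset.mem_erase.mpr ⟨hsk, hs⟩) ?_⟩
        rw [hT]
        simp
      · refine ⟨((Sfin.erase k).image (fun s => |s - k|)).min' (hT.image _), ?_, ?_⟩
        · obtain ⟨s, hs, hmin⟩ := Finset.mem_image.mp (Finset.min'_mem
            ((Sfin.erase k).image (fun s => |s - k|)) (hT.image _))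
          rw [← hmin]
          exact abs_pos.mpr (sub_ne_zero.mpr (Finset.mem_erase.mp hs).1)
        · intro s hs hsk
          exact Finset.min'_le _ _ (Finset.mem_image_of_mem _ (Finset.mem_erase.mpr ⟨hsk, hs⟩))
    refine ⟨min ε₁ ε₂, lt_min hε₁ hε₂, fun k' hk' habs => ?_⟩
    have hk'0 : (0 : ℝ) ≤ k' := (hα.trans_le hk'.1).le
    have hnear : ‖L k' - L k‖ < min δ (c' / 2) := by
      have := hcw' (show k' ∈ Set.Ici (0:ℝ) from hk'0) (by
        rw [Real.dist_eq]
        exact habs.trans_le (min_le_left _ _))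
      rwa [dist_eq_norm] at this
    have habs₂ : |k' - k| < ε₂ := habs.trans_le (min_le_right _ _)
    constructor
    · intro hk'k
      have hnu : nu (L k) ≤ nu (L k') :=
        hlsc (L k') (hcomp k' hk'0) (hnear.trans_le (min_le_left _ _))
      have hsum : Sfin.filter (fun s => α ≤ s ∧ s < k) =
          Sfin.filter (fun s => α ≤ s ∧ s < k') := by
        apply Finset.filter_congr
        intro s hs
        simp only [eq_iff_iff, and_congr_right_iff]
        intro _
        constructor
        · intro hsk
          by_contra hsk'
          push_neg at hsk'
          have hsne : s ≠ k := fun hh => absurd (hh ▸ hsk) (lt_irrefl k)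
          have h6 := hsep s hs hsne
          rw [abs_of_neg (by linarith : s - k < 0)] at h6
          rw [abs_of_nonpos (by linarith : k' - k ≤ 0)] at habs₂
          linarith
        · intro hsk'
          exact hsk'.trans_le hk'k
      have hc1 : (nu (L k) : ℤ) ≤ (nu (L k') : ℤ) := by exact_mod_cast hnu
      simp only [hF]
      rw [hsum]
      linarith
    · intro hkk'
      have hnu : nu (L k') ≤ nu (L k) + d k := by
        apply nu_jump hcpos hb' (L k) hsak hKk hc' hspec (L k')
        rw [norm_sub_rev]
        exact (hnear.trans_le (min_le_right _ _)).le
      rcases eq_or_lt_of_le hkk' with rfl | hlt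
      · exact le_rfl
      by_cases hker : LinearMap.ker (L k : H →ₗ[ℂ] H) = ⊥
      · have hdk : d k = 0 := by
          simp only [hd]
          rw [hker]
          exact finrank_bot ℂ H
        have hkS : k ∉ Sfin := by
          rw [hSfin, Set.Finite.mem_toFinset]
          rintro ⟨_, hne⟩
          exact hne hker
        have hsum : Sfin.filter (fun s => α ≤ s ∧ s < k') =
            Sfin.filter (fun s => α ≤ s ∧ s < k) := by
          apply Finset.filter_congr
          intro s hs
          simp only [eq_iff_iff, and_congr_right_iff]
          intro _
          constructor
          · intro hsk'
            by_contra hsk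
            push_neg at hsk
            have hsne : s ≠ k := fun hh => hkS (hh ▸ hs)
            have h6 := hsep s hs hsne
            rw [abs_of_nonneg (by linarith : (0:ℝ) ≤ s - k)] at h6
            rw [abs_of_nonneg (by linarith : (0:ℝ) ≤ k' - k)] at habs₂
            linarith
          · intro hsk
            exact hsk.trans hlt
        have hc1 : (nu (L k') : ℤ) ≤ (nu (L k) : ℤ) := by
          have : nu (L k') ≤ nu (L k) := by omega
          exact_mod_cast this
        simp only [hF]
        rw [hsum]
        linarith
      · have hkSfin : k ∈ Sfin := by
          rw [hSfin, Set.Finite.mem_toFinset]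
          exact ⟨hα.trans_le hk.1, hker⟩
        have hins : Sfin.filter (fun s => α ≤ s ∧ s < k') =
            insert k (Sfin.filter (fun s => α ≤ s ∧ s < k)) := by
          ext s
          simp only [Finset.mem_insert, Finset.mem_filter]
          constructor
          · rintro ⟨hs, hsα, hsk'⟩
            by_cases hsk : s = k
            · exact Or.inl hsk
            · refine Or.inr ⟨hs, hsα, ?_⟩
              by_contra hns
              push_neg at hns
              have h6 := hsep s hs hsk
              rw [abs_of_nonneg (by linarith : (0:ℝ) ≤ s - k)] at h6
              rw [abs_of_nonneg (by linarith : (0:ℝ) ≤ k' - k)] at habs₂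
              linarith
          · rintro (rfl | ⟨hs, hsα, hsk⟩)
            · exact ⟨hkSfin, hk.1, hlt⟩
            · exact ⟨hs, hsα, hsk.trans hlt⟩
        have hknotin : k ∉ Sfin.filter (fun s => α ≤ s ∧ s < k) := by
          simp only [Finset.mem_filter]
          rintro ⟨_, _, hkk⟩
          exact lt_irrefl k hkk
        have hc1 : (nu (L k') : ℤ) ≤ (nu (L k) : ℤ) + (d k : ℤ) := by exact_mod_cast hnu
        simp only [hF]
        rw [hins, Finset.sum_insert hknotin]
        linarith
  have hFβα : F β ≤ F α := int_mono hβα.le F hloc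
  have hFα : F α = (nu (L α) : ℤ) := by
    simp only [hF]
    have : Sfin.filter (fun s => α ≤ s ∧ s < α) = ∅ := by
      apply Finset.filter_false_of_mem
      rintro s _ ⟨h1, h2⟩
      exact absurd (h1.trans_lt h2) (lt_irrefl α)
    rw [this, Finset.sum_empty, sub_zero]
  have hnuα : nu (L α) = 0 := nu_eq_zero_of_pos (L α) hpos
  have hFα0 : F α = 0 := by rw [hFα, hnuα]; rfl
  have hnuβ : nu (L β) ≤ D := by
    have h1 : (nu (L β) : ℤ) ≤ ∑ s ∈ Sfin.filter (fun s => α ≤ s ∧ s < β), (d s : ℤ) := by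
      have := hFβα
      rw [hFα0] at this
      simp only [hF] at this
      linarith
    have h2 : ∑ s ∈ Sfin.filter (fun s => α ≤ s ∧ s < β), (d s : ℤ) ≤ (D : ℤ) := by
      rw [hD]
      push_cast
      apply Finset.sum_le_sum_of_subset_of_nonneg (Finset.filter_subset _ _)
      intro s _ _
      positivity
    have := h1.trans h2
    exact_mod_cast this
  -- the m-dimensional subspace at β
  haveI hWfd : FiniteDimensional ℂ W := FiniteDimensional.of_finrank_pos (by
    rw [hWrank, hm]; omega)
  obtain ⟨c'', hc'', hgapβ⟩ := exists_gap hcpos hb' (L β) (hcomp β hβ0.le)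
  have hspecβ := spec_gap (L β) (hsa' β hβ0.le) hc'' hgapβ
  have hWneg' : ∀ u ∈ W, u ≠ 0 → qf (L β) u < c'' * ‖u‖ ^ 2 := by
    intro u hu hu0
    have h1 := hWneg u hu
    have hn : (0 : ℝ) < ‖u‖ := norm_pos_iff.mpr hu0
    have h2 : (0 : ℝ) < c'' * ‖u‖ ^ 2 := by positivity
    exact lt_of_le_of_lt h1 h2
  have hmain : finrank ℂ W ≤ nu (L β) + d β :=
    dim_le hcpos hb' (L β) (hsa' β hβ0.le) (hcomp β hβ0.le) hc'' hspecβ W hWfd hWneg'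
  have hdβ : d β ≤ D := by
    by_cases hkerβ : LinearMap.ker (L β : H →ₗ[ℂ] H) = ⊥
    · have : d β = 0 := by
        simp only [hd]
        rw [hkerβ]
        exact finrank_bot ℂ H
      omega
    · have hβS : β ∈ Sfin := by
        rw [hSfin, Set.Finite.mem_toFinset]
        exact ⟨hβ0, hkerβ⟩
      rw [hD]
      exact Finset.single_le_sum (fun s _ => Nat.zero_le _) hβS
  rw [hWrank] at hmain
  omega
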